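/- For every real number x with 0 < x < 1, the strict inequality arcsin x < φ(x) holds, where φ(x) = (π(2 − √2)/(π − 2√2))·(√(1 + x) − √(1 − x)) / (√2(4 − π)/(π − 2√2) + √(1 + x) + √(1 − x)). -/

import Mathlib

/-!
Substitute `x = sin 2t` with `0 < t < π/4`. Then `√(1 ± x) = cos t ± sin t`, so
`φ(x) = 2(β + 2) sin t / (β + 2 cos t)` with `β = √2(4 - π)/(π - 2√2)`, and the claim
becomes `0 < g(t)` for `g(u) = (β + 2) sin u - β u - 2u cos u`. Now `g(0) = 0`, and
`g(π/4) = 0` is exactly the equation that determines `β` (it says `φ(1) = π/2`). Moreover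
`g'(u) = 2 sin(u/2) k(u)` with `k(u) = 2u cos(u/2) - β sin(u/2)`, which vanishes at `0` and
is strictly concave on `[0, π]` since `β ≤ 8`. So `k`, and with it `g'`, changes sign at most
once, from `+` to `-`: `g` rises and then falls, hence is positive strictly between its zeros
`0` and `π/4`.
-/

/-- The upper bound `φ` for `arcsin` obtained by the λ-method of Mitrinović–Vasić. -/
noncomputable def phiBound (x : ℝ) : ℝ :=
  (Real.pi * (2 - Real.sqrt 2) / (Real.pi - 2 * Real.sqrt 2)) *
      (Real.sqrt (1 + x) - Real.sqrt (1 - x)) /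
    (Real.sqrt 2 * (4 - Real.pi) / (Real.pi - 2 * Real.sqrt 2) +
      Real.sqrt (1 + x) + Real.sqrt (1 - x))

open Real Set

theorem StrictConcaveOn.forall_pos_or_forall_neg {k : ℝ → ℝ} {a b t : ℝ}
    (hk : StrictConcaveOn ℝ (Icc a b) k) (ha : k a = 0) (hat : a < t) (htb : t < b) :
    (∀ s ∈ Ioo a t, 0 < k s) ∨ ∀ s ∈ Ioo t b, k s < 0 := by
  have slope_lt {x y : ℝ} (hx : x ∈ Ioc a b) (hy : y ∈ Ioc a b) (hxy : x < y) :
      k y / (y - a) < k x / (x - a) := by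
    simpa [ha] using hk.secant_strict_mono (left_mem_Icc.2 (hat.trans htb).le)
      (Ioc_subset_Icc_self hx) (Ioc_subset_Icc_self hy) hx.1.ne' hy.1.ne' hxy
  rcases lt_or_ge 0 (k t) with hkt | hkt
  · refine .inl fun s hs => ?_
    have := slope_lt ⟨hs.1, (hs.2.trans htb).le⟩ ⟨hat, htb.le⟩ hs.2
    exact (div_pos_iff_of_pos_right (sub_pos.2 hs.1)).1
      ((div_pos hkt (sub_pos.2 hat)).trans this)
  · refine .inr fun s hs => ?_
    have := slope_lt ⟨hat, htb.le⟩ ⟨hat.trans hs.1, hs.2.le⟩ hs.1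
    have hsa : 0 < s - a := sub_pos.2 (hat.trans hs.1)
    by_contra! hks
    exact this.not_ge ((div_nonpos_of_nonpos_of_nonneg hkt (sub_pos.2 hat).le).trans
      (div_nonneg hks hsa.le))

theorem pos_of_eq_zero_of_deriv_pos_or_neg {g : ℝ → ℝ} {a b t : ℝ}
    (hg : ContinuousOn g (Icc a b)) (ha : g a = 0) (hb : g b = 0) (hat : a < t) (htb : t < b)
    (hg' : (∀ s ∈ Ioo a t, 0 < deriv g s) ∨ ∀ s ∈ Ioo t b, deriv g s < 0) : 0 < g t := by
  rcases hg' with hg' | hg'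
  · have := strictMonoOn_of_deriv_pos (convex_Icc a t) (hg.mono (Icc_subset_Icc_right htb.le))
      (by rwa [interior_Icc])
    simpa [ha] using this (left_mem_Icc.2 hat.le) (right_mem_Icc.2 hat.le) hat
  · have := strictAntiOn_of_deriv_neg (convex_Icc t b) (hg.mono (Icc_subset_Icc_left hat.le))
      (by rwa [interior_Icc])
    simpa [hb] using this (left_mem_Icc.2 htb.le) (right_mem_Icc.2 htb.le) htb

theorem sqrt_two_lt : √2 < 1.415 := by
  rw [sqrt_lt' (by norm_num)]
  norm_num

theorem two_mul_sqrt_two_lt_pi : 2 * √2 < π := by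
  linarith [sqrt_two_lt, pi_gt_d2]

namespace PhiBound

noncomputable def gap (b u : ℝ) : ℝ := (b + 2) * sin u - b * u - 2 * u * cos u

noncomputable def gapFactor (b u : ℝ) : ℝ := 2 * u * cos (u / 2) - b * sin (u / 2)

variable (b : ℝ)

theorem hasDerivAt_gap (u : ℝ) :
    HasDerivAt (gap b) (2 * sin (u / 2) * gapFactor b u) u := by
  refine ((((hasDerivAt_sin u).const_mul (b + 2)).sub ((hasDerivAt_id u).const_mul b)).sub
    (((hasDerivAt_id u).const_mul 2).mul (hasDerivAt_cos u))).congr_deriv ?_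
  have hsin : sin u = 2 * sin (u / 2) * cos (u / 2) := by
    rw [← sin_two_mul, mul_div_cancel₀ u two_ne_zero]
  have hcos : cos u = 2 * cos (u / 2) ^ 2 - 1 := by
    rw [← cos_two_mul, mul_div_cancel₀ u two_ne_zero]
  simp only [gapFactor, id]
  linear_combination (2 * u) * hsin + b * hcos + 2 * b * sin_sq_add_cos_sq (u / 2)

theorem hasDerivAt_gapFactor (u : ℝ) :
    HasDerivAt (gapFactor b) ((2 - b / 2) * cos (u / 2) - u * sin (u / 2)) u := by
  have hhalf := (hasDerivAt_id u).div_const 2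
  refine ((((hasDerivAt_id u).const_mul 2).mul ((hasDerivAt_cos _).comp u hhalf)).sub
    (((hasDerivAt_sin _).comp u hhalf).const_mul b)).congr_deriv ?_
  simp only [id, Function.comp_apply]
  ring

theorem hasDerivAt_deriv_gapFactor (u : ℝ) :
    HasDerivAt (deriv (gapFactor b)) ((b / 4 - 2) * sin (u / 2) - u / 2 * cos (u / 2)) u := by
  have hhalf := (hasDerivAt_id u).div_const 2
  rw [show deriv (gapFactor b) = _ from funext fun v => (hasDerivAt_gapFactor b v).deriv]
  refine ((((hasDerivAt_cos _).comp u hhalf).const_mul (2 - b / 2)).sub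
    ((hasDerivAt_id u).mul ((hasDerivAt_sin _).comp u hhalf))).congr_deriv ?_
  simp only [id, Function.comp_apply]
  ring

variable {b}

theorem strictConcaveOn_gapFactor (hb : b ≤ 8) :
    StrictConcaveOn ℝ (Icc 0 π) (gapFactor b) := by
  refine strictConcaveOn_of_deriv2_neg (convex_Icc 0 π) (by unfold gapFactor; fun_prop)
    fun u hu => ?_
  rw [interior_Icc] at hu
  have hsin : 0 < sin (u / 2) :=
    sin_pos_of_pos_of_lt_pi (by linarith [hu.1]) (by linarith [hu.2, pi_pos])
  have hcos : 0 < cos (u / 2) :=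
    cos_pos_of_mem_Ioo ⟨by linarith [hu.1, pi_pos], by linarith [hu.2]⟩
  rw [Function.iterate_succ_apply, Function.iterate_one, (hasDerivAt_deriv_gapFactor b u).deriv]
  nlinarith [mul_pos hu.1 hcos]

theorem gap_pos {c t : ℝ} (hb : b ≤ 8) (hc : c ≤ π) (hgc : gap b c = 0) (ht : 0 < t)
    (htc : t < c) : 0 < gap b t := by
  refine pos_of_eq_zero_of_deriv_pos_or_neg (by unfold gap; fun_prop) (by simp [gap]) hgc ht htc
    ?_
  have hsin {s : ℝ} (hs : s ∈ Ioo 0 c) : 0 < 2 * sin (s / 2) := by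
    have := sin_pos_of_pos_of_lt_pi (x := s / 2) (by linarith [hs.1]) (by linarith [hs.2, pi_pos])
    positivity
  rcases ((strictConcaveOn_gapFactor hb).subset (Icc_subset_Icc_right hc) (convex_Icc 0 c))
    |>.forall_pos_or_forall_neg (by simp [gapFactor]) ht htc with hk | hk
  · exact .inl fun s hs => (hasDerivAt_gap b s).deriv ▸
      mul_pos (hsin ⟨hs.1, hs.2.trans htc⟩) (hk s hs)
  · exact .inr fun s hs => (hasDerivAt_gap b s).deriv ▸
      mul_neg_of_pos_of_neg (hsin ⟨ht.trans hs.1, hs.2⟩) (hk s hs)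

noncomputable def β : ℝ := √2 * (4 - π) / (π - 2 * √2)

theorem beta_pos : 0 < β :=
  div_pos (mul_pos (sqrt_pos.2 two_pos) (by linarith [pi_lt_four]))
    (sub_pos.2 two_mul_sqrt_two_lt_pi)

theorem beta_le_eight : β ≤ 8 := by
  rw [β, div_le_iff₀ (sub_pos.2 two_mul_sqrt_two_lt_pi)]
  nlinarith [sqrt_two_lt, pi_gt_d2, sqrt_nonneg 2]

theorem beta_add_two : β + 2 = π * (2 - √2) / (π - 2 * √2) := by
  rw [β, div_add' _ _ _ (sub_pos.2 two_mul_sqrt_two_lt_pi).ne']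
  ring

theorem gap_beta_pi_div_four : gap β (π / 4) = 0 := by
  have hD : π - √2 * 2 ≠ 0 := by linarith [two_mul_sqrt_two_lt_pi]
  rw [gap, sin_pi_div_four, cos_pi_div_four, β]
  field_simp
  ring

end PhiBound

open PhiBound

theorem sqrt_one_add_sin_two_mul {v : ℝ} (hv : v ∈ Icc (-(π / 4)) (π / 4)) :
    √(1 + sin (2 * v)) = cos v + sin v := by
  have hnonneg : 0 ≤ cos v + sin v := by
    have := sin_nonneg_of_nonneg_of_le_pi (x := v + π / 4) (by linarith [hv.1])
      (by linarith [hv.2, pi_pos])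
    rw [sin_add, sin_pi_div_four, cos_pi_div_four] at this
    nlinarith [sqrt_pos.2 (two_pos : (0:ℝ) < 2)]
  rw [← sqrt_sq hnonneg, sin_two_mul]
  congr 1
  linear_combination -sin_sq_add_cos_sq v

theorem sqrt_one_sub_sin_two_mul {v : ℝ} (hv : v ∈ Icc (-(π / 4)) (π / 4)) :
    √(1 - sin (2 * v)) = cos v - sin v := by
  have hnonneg : 0 ≤ cos v - sin v := by
    have := cos_nonneg_of_mem_Icc (x := v + π / 4)
      ⟨by linarith [hv.1, pi_pos], by linarith [hv.2]⟩
    rw [cos_add, sin_pi_div_four, cos_pi_div_four] at this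
    nlinarith [sqrt_pos.2 (two_pos : (0:ℝ) < 2)]
  rw [← sqrt_sq hnonneg, sin_two_mul]
  congr 1
  linear_combination -sin_sq_add_cos_sq v

theorem phiBound_sin_two_mul {v : ℝ} (hv : v ∈ Icc (-(π / 4)) (π / 4)) :
    phiBound (sin (2 * v)) = (β + 2) * (2 * sin v) / (β + 2 * cos v) := by
  rw [phiBound, sqrt_one_add_sin_two_mul hv, sqrt_one_sub_sin_two_mul hv, ← beta_add_two, ← β]
  congr 1 <;> ring

theorem arcsin_lt_phiBound (x : ℝ) (hx : 0 < x) (hx' : x < 1) :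
    Real.arcsin x < phiBound x := by
  obtain ⟨t, ht⟩ : ∃ t, arcsin x = 2 * t := ⟨arcsin x / 2, by ring⟩
  have ht0 : 0 < t := by linarith [arcsin_pos.2 hx]
  have htπ : t < π / 4 := by linarith [arcsin_lt_pi_div_two.2 hx']
  have hx_eq : x = sin (2 * t) := by rw [← ht, sin_arcsin (by linarith) hx'.le]
  have hcos : 0 < cos t := cos_pos_of_mem_Ioo ⟨by linarith, by linarith⟩
  rw [ht, hx_eq, phiBound_sin_two_mul ⟨by linarith, htπ.le⟩,
    lt_div_iff₀ (by linarith [beta_pos])]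
  have hgap := gap_pos beta_le_eight (by linarith [pi_pos]) gap_beta_pi_div_four ht0 htπ
  rw [gap] at hgap
  linarith
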